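/- The Cauchy kernel E(x) = σ_{m+1}^{−1} x^c / |x|^{m+1} is both left and right monogenic on M ∖ {0}: for every x ∈ M ∖ {0}, ∑_{s=0}^m v_s (∂E/∂x_s)(x) = 0 and ∑_{s=0}^m (∂E/∂x_s)(x) v_s = 0. -/

import Mathlib

open MeasureTheory

noncomputable section

/-- A real alternative `*`-algebra of finite dimension `> 1`, with a fixed
hypercomplex basis `v 0 = 1, v 1, …, v m` spanning the hypercomplex subspace `M`.
Multiplication is `ℝ`-bilinear (bundled as a linear map). -/
structure HCAlg (𝔸 : Type) [NormedAddCommGroup 𝔸] [NormedSpace ℝ 𝔸] (m : ℕ) : Type where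
  mul : 𝔸 →ₗ[ℝ] 𝔸 →ₗ[ℝ] 𝔸
  one : 𝔸
  conj : 𝔸 →ₗ[ℝ] 𝔸
  findim : FiniteDimensional ℝ 𝔸
  dim_gt_one : 1 < Module.finrank ℝ 𝔸
  one_mul' : ∀ a, mul one a = a
  mul_one' : ∀ a, mul a one = a
  alt_left : ∀ a b, mul a (mul a b) = mul (mul a a) b
  alt_right : ∀ a b, mul (mul b a) a = mul b (mul a a)
  conj_invol : ∀ a, conj (conj a) = a
  conj_mul' : ∀ a b, conj (mul a b) = mul (conj b) (conj a)
  conj_one : conj one = one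
  hm : 1 ≤ m
  v : Fin (m + 1) → 𝔸
  v_indep : LinearIndependent ℝ v
  v_zero : v 0 = one
  v_trace : ∀ s, s ≠ 0 → v s + conj (v s) = 0
  v_norm : ∀ s, s ≠ 0 → mul (v s) (conj (v s)) = one
  v_anticomm : ∀ s t, s ≠ 0 → t ≠ 0 → s ≠ t → mul (v s) (v t) = -(mul (v t) (v s))

variable {𝔸 : Type} [NormedAddCommGroup 𝔸] [NormedSpace ℝ 𝔸] {m n : ℕ}

/-- `M^n`, identified with `ℝ^{(m+1)n}` via the coordinates `x j s`. -/
abbrev Mn (n m : ℕ) := Fin n → Fin (m + 1) → ℝ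

/-- Euclidean norm of a point of `M` (in coordinates). -/
def enormM (c : Fin (m + 1) → ℝ) : ℝ := Real.sqrt (∑ s, c s ^ 2)

/-- Euclidean norm of a point of `M^n` (in coordinates). -/
def enormMn (x : Mn n m) : ℝ := Real.sqrt (∑ j, ∑ s, x j s ^ 2)

/-- Partial derivative `∂f/∂x_{j,s}` for functions on `M^n`. -/
def pd {E : Type} [NormedAddCommGroup E] [NormedSpace ℝ E]
    (f : Mn n m → E) (j : Fin n) (s : Fin (m + 1)) (x : Mn n m) : E :=
  fderiv ℝ f x (Pi.single j (Pi.single s 1))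

/-- Partial derivative `∂f/∂x_s` for functions on `M`. -/
def pd1 {E : Type} [NormedAddCommGroup E] [NormedSpace ℝ E]
    (f : (Fin (m + 1) → ℝ) → E) (s : Fin (m + 1)) (x : Fin (m + 1) → ℝ) : E :=
  fderiv ℝ f x (Pi.single s 1)

/-- The Dirac (Cauchy–Riemann) operator `∂̄_j = ∑_s v_s ∂/∂x_{j,s}`. -/
def dbar (H : HCAlg 𝔸 m) (f : Mn n m → 𝔸) (j : Fin n) (x : Mn n m) : 𝔸 :=
  ∑ s, H.mul (H.v s) (pd f j s x)

/-- The conjugated Dirac operator `∂_j = ∑_s v_s^c ∂/∂x_{j,s}`. -/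
def dconj (H : HCAlg 𝔸 m) (f : Mn n m → 𝔸) (j : Fin n) (x : Mn n m) : 𝔸 :=
  ∑ s, H.mul (H.conj (H.v s)) (pd f j s x)

/-- The Laplacian `Δ_j = ∑_s ∂²/∂x_{j,s}²` in the `j`-th block of variables. -/
def lap {E : Type} [NormedAddCommGroup E] [NormedSpace ℝ E]
    (f : Mn n m → E) (j : Fin n) (x : Mn n m) : E :=
  ∑ s, pd (pd f j s) j s x

/-- Surface area of the unit `(N-1)`-sphere in `ℝ^N`: `σ_N = 2 π^{N/2} / Γ(N/2)`. -/
def usigma (N : ℕ) : ℝ := 2 * Real.pi ^ ((N : ℝ) / 2) / Real.Gamma ((N : ℝ) / 2)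

/-- Embedding of coordinates into the hypercomplex subspace `M ⊆ 𝔸`. -/
def embM (H : HCAlg 𝔸 m) (c : Fin (m + 1) → ℝ) : 𝔸 := ∑ s, c s • H.v s

/-- The Cauchy kernel `E(x) = σ_{m+1}⁻¹ x^c / |x|^{m+1}` on `M`. -/
def CauchyE (H : HCAlg 𝔸 m) (c : Fin (m + 1) → ℝ) : 𝔸 :=
  (usigma (m + 1) * enormM c ^ (m + 1))⁻¹ • H.conj (embM H c)

/-- The Bochner–Martinelli kernel components `K_j(x) = σ_N⁻¹ x_j^c / |x|^N`, `N = (m+1)n`. -/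
def Kker (H : HCAlg 𝔸 m) (n : ℕ) (j : Fin n) (x : Mn n m) : 𝔸 :=
  (usigma ((m + 1) * n) * enormMn x ^ ((m + 1) * n))⁻¹ • H.conj (embM H (x j))

/-- `Tsol g (x) = −∫_M E(y₁ − x₁) (g(y₁, x⁰)) dV(y₁)`. -/
def Tsol (H : HCAlg 𝔸 m) (hn : 0 < n) (g : Mn n m → 𝔸) (x : Mn n m) : 𝔸 :=
  - ∫ y1 : Fin (m + 1) → ℝ,
      H.mul (CauchyE H (y1 - x ⟨0, hn⟩)) (g (Function.update x ⟨0, hn⟩ y1))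

/-- `Fint g (x) = ∫_M E(y₁) (g(y₁ + x₁, x⁰)) dV(y₁)`. -/
def Fint (H : HCAlg 𝔸 m) (hn : 0 < n) (g : Mn n m → 𝔸) (x : Mn n m) : 𝔸 :=
  ∫ y1 : Fin (m + 1) → ℝ,
      H.mul (CauchyE H y1) (g (Function.update x ⟨0, hn⟩ (y1 + x ⟨0, hn⟩)))


/-! On `M`, `x x^c = x^c x = |x|² · 1` and `∑ₛ vₛ vₛ^c = ∑ₛ vₛ^c vₛ = (m + 1) · 1`. Writing
`E = σ⁻¹ q^p x^c` with `q = |x|²`, one has `∂ₛE = σ⁻¹ (q^p vₛ^c + 2p q^(p-1) xₛ x^c)`, so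
`∑ₛ vₛ ∂ₛE = σ⁻¹ q^p ((m + 1) + 2p)`, and likewise on the right; this vanishes exactly for the
exponent `p = -(m + 1)/2` of the Cauchy kernel. -/

section RadialKernel

variable {ι : Type*} [Fintype ι] {F : Type*} [NormedAddCommGroup F] [NormedSpace ℝ F]

theorem sum_sq_ne_zero {x : ι → ℝ} (hx : x ≠ 0) : ∑ i, x i ^ 2 ≠ 0 := by
  simpa [sq, Finset.sum_mul_self_eq_zero_iff, funext_iff] using hx

theorem hasFDerivAt_sum_sq (x : ι → ℝ) :
    HasFDerivAt (fun c : ι → ℝ => ∑ i, c i ^ 2)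
      (∑ i, (2 * x i) • ContinuousLinearMap.proj (R := ℝ) (φ := fun _ : ι => ℝ) i) x :=
  HasFDerivAt.fun_sum fun i _ =>
    ((hasFDerivAt_apply (𝕜 := ℝ) (F' := fun _ : ι => ℝ) i x).pow 2).congr_fderiv (by norm_num)

theorem fderiv_rpow_sum_sq_smul_single [DecidableEq ι] (L : (ι → ℝ) →L[ℝ] F) (p : ℝ)
    {x : ι → ℝ} (hx : x ≠ 0) (s : ι) :
    fderiv ℝ (fun c => (∑ i, c i ^ 2) ^ p • L c) x (Pi.single s 1) =
      (∑ i, x i ^ 2) ^ p • L (Pi.single s 1) +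
        (2 * p * (∑ i, x i ^ 2) ^ (p - 1) * x s) • L x := by
  have hderiv :=
    ((hasFDerivAt_sum_sq x).rpow_const (p := p) (Or.inl (sum_sq_ne_zero hx))).fun_smul
      L.hasFDerivAt
  rw [hderiv.fderiv]
  simp [Pi.single_apply]
  ring_nf

end RadialKernel

theorem sum_sum_mul_smul_of_add_swap {ι E : Type*} [Fintype ι] [DecidableEq ι] [AddCommGroup E]
    [Module ℝ E] (a : ι → ℝ) (f : ι → ι → E) (c : E)
    (hf : ∀ s t, f s t + f t s = if s = t then (2 : ℝ) • c else 0) :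
    ∑ s, ∑ t, (a s * a t) • f s t = (∑ s, a s ^ 2) • c := by
  apply smul_right_injective E (two_ne_zero' ℝ)
  calc (2 : ℝ) • ∑ s, ∑ t, (a s * a t) • f s t
      = ∑ s, ∑ t, (a s * a t) • (f s t + f t s) := by
        rw [two_smul]
        nth_rewrite 2 [Finset.sum_comm]
        simp only [← Finset.sum_add_distrib, smul_add, mul_comm (a _) (a _)]
    _ = (2 : ℝ) • (∑ s, a s ^ 2) • c := by
        simp [hf, Finset.smul_sum, Finset.sum_smul, smul_smul, sq, mul_comm]

namespace HCAlg

variable (H : HCAlg 𝔸 m)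

theorem conj_v {s : Fin (m + 1)} (hs : s ≠ 0) : H.conj (H.v s) = -H.v s :=
  eq_neg_of_add_eq_zero_right (H.v_trace s hs)

theorem v_mul_conj_v (s : Fin (m + 1)) : H.mul (H.v s) (H.conj (H.v s)) = H.one := by
  rcases eq_or_ne s 0 with rfl | hs
  · rw [H.v_zero, H.conj_one, H.one_mul']
  · exact H.v_norm s hs

theorem conj_v_mul_v (s : Fin (m + 1)) : H.mul (H.conj (H.v s)) (H.v s) = H.one := by
  rcases eq_or_ne s 0 with rfl | hs
  · rw [H.v_zero, H.conj_one, H.one_mul']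
  · simpa [H.conj_v hs] using H.v_norm s hs

theorem v_mul_conj_v_add_swap (s t : Fin (m + 1)) :
    H.mul (H.v s) (H.conj (H.v t)) + H.mul (H.v t) (H.conj (H.v s)) =
      if s = t then (2 : ℝ) • H.one else 0 := by
  split_ifs with hst
  · rw [hst, H.v_mul_conj_v, two_smul]
  rcases eq_or_ne s 0 with rfl | hs
  · rw [H.v_zero, H.conj_one, H.one_mul', H.mul_one', add_comm, H.v_trace t (Ne.symm hst)]
  rcases eq_or_ne t 0 with rfl | ht
  · rw [H.v_zero, H.conj_one, H.one_mul', H.mul_one', H.v_trace s hs]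
  rw [H.conj_v hs, H.conj_v ht, map_neg, map_neg, H.v_anticomm s t hs ht hst, neg_neg,
    add_neg_cancel]

theorem conj_embM (x : Fin (m + 1) → ℝ) :
    H.conj (embM H x) = embM H (fun s => if s = 0 then x s else -x s) := by
  simp only [embM, map_sum, map_smul]
  refine Finset.sum_congr rfl fun s _ => ?_
  rcases eq_or_ne s 0 with rfl | hs
  · rw [H.v_zero, H.conj_one, if_pos rfl]
  · rw [H.conj_v hs, if_neg hs, smul_neg, neg_smul]

theorem embM_mul_conj_embM (x : Fin (m + 1) → ℝ) :
    H.mul (embM H x) (H.conj (embM H x)) = (∑ s, x s ^ 2) • H.one := by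
  rw [← sum_sum_mul_smul_of_add_swap x _ _ H.v_mul_conj_v_add_swap, Finset.sum_comm]
  simp [embM, Finset.smul_sum, smul_smul, mul_comm]

/-- `x^c` lies in `M` again, with the same norm, so this is `embM_mul_conj_embM` for `x^c`. -/
theorem conj_embM_mul_embM (x : Fin (m + 1) → ℝ) :
    H.mul (H.conj (embM H x)) (embM H x) = (∑ s, x s ^ 2) • H.one := by
  nth_rewrite 2 [← H.conj_invol (embM H x)]
  rw [H.conj_embM, embM_mul_conj_embM]
  congr 1
  refine Finset.sum_congr rfl fun s _ => ?_
  split_ifs <;> ring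

theorem sum_v_mul_conj_v : ∑ s, H.mul (H.v s) (H.conj (H.v s)) = ((m : ℝ) + 1) • H.one := by
  simp [v_mul_conj_v, ← Nat.cast_smul_eq_nsmul ℝ]

theorem sum_conj_v_mul_v : ∑ s, H.mul (H.conj (H.v s)) (H.v s) = ((m : ℝ) + 1) • H.one := by
  simp [conj_v_mul_v, ← Nat.cast_smul_eq_nsmul ℝ]

theorem sum_smul_v_mul (x : Fin (m + 1) → ℝ) (w : 𝔸) :
    ∑ s, x s • H.mul (H.v s) w = H.mul (embM H x) w := by
  simp [embM]

theorem sum_smul_mul_v (x : Fin (m + 1) → ℝ) (w : 𝔸) :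
    ∑ s, x s • H.mul w (H.v s) = H.mul w (embM H x) := by
  simp [embM]

theorem sum_v_mul_radial_deriv (x : Fin (m + 1) → ℝ) (a b : ℝ) :
    ∑ s, H.mul (H.v s) (a • H.conj (H.v s) + (b * x s) • H.conj (embM H x)) =
      (a * (m + 1) + b * ∑ s, x s ^ 2) • H.one := by
  simp only [map_add, map_smul, mul_smul, Finset.sum_add_distrib, ← Finset.smul_sum,
    sum_smul_v_mul, sum_v_mul_conj_v, embM_mul_conj_embM]
  module

theorem sum_radial_deriv_mul_v (x : Fin (m + 1) → ℝ) (a b : ℝ) :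
    ∑ s, H.mul (a • H.conj (H.v s) + (b * x s) • H.conj (embM H x)) (H.v s) =
      (a * (m + 1) + b * ∑ s, x s ^ 2) • H.one := by
  simp only [map_add, map_smul, mul_smul, LinearMap.add_apply, LinearMap.smul_apply,
    Finset.sum_add_distrib, ← Finset.smul_sum, sum_smul_mul_v, sum_conj_v_mul_v,
    conj_embM_mul_embM]
  module

theorem embM_single (s : Fin (m + 1)) : embM H (Pi.single s 1) = H.v s := by
  simp [embM, Pi.single_apply]

def conjEmbCLM : (Fin (m + 1) → ℝ) →L[ℝ] 𝔸 :=
  (H.conj ∘ₗ Fintype.linearCombination ℝ H.v).toContinuousLinearMap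

theorem conjEmbCLM_apply (c : Fin (m + 1) → ℝ) : H.conjEmbCLM c = H.conj (embM H c) := rfl

theorem cauchyE_eq_rpow_smul :
    CauchyE H = fun c =>
      (∑ i, c i ^ 2) ^ (-((m : ℝ) + 1) / 2) • ((usigma (m + 1))⁻¹ • H.conjEmbCLM) c := by
  funext c
  have hq : 0 ≤ ∑ i, c i ^ 2 := Finset.sum_nonneg fun i _ => sq_nonneg (c i)
  have hnorm : (enormM c ^ (m + 1))⁻¹ = (∑ i, c i ^ 2) ^ (-((m : ℝ) + 1) / 2) := by
    rw [enormM, Real.sqrt_eq_rpow, ← Real.rpow_natCast, ← Real.rpow_mul hq, ← Real.rpow_neg hq]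
    congr 1
    push_cast
    ring
  rw [CauchyE, smul_apply, conjEmbCLM_apply, smul_smul, mul_inv, hnorm, mul_comm]

theorem pd1_cauchyE {x : Fin (m + 1) → ℝ} (hx : x ≠ 0) (s : Fin (m + 1)) :
    pd1 (CauchyE H) s x =
      ((usigma (m + 1))⁻¹ * (∑ i, x i ^ 2) ^ (-((m : ℝ) + 1) / 2)) • H.conj (H.v s) +
        (-(usigma (m + 1))⁻¹ * (m + 1) * (∑ i, x i ^ 2) ^ (-((m : ℝ) + 1) / 2 - 1) * x s) •
          H.conj (embM H x) := by
  rw [pd1, cauchyE_eq_rpow_smul, fderiv_rpow_sum_sq_smul_single _ _ hx]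
  simp only [smul_apply, conjEmbCLM_apply, smul_smul, embM_single]
  congr 2 <;> ring

end HCAlg

/-- (Example 3.1): the Cauchy kernel `E(x) = σ_{m+1}⁻¹ x^c / |x|^{m+1}` is both left and
right monogenic on `M ∖ {0}`: `∑_s v_s (∂E/∂x_s) = 0` and `∑_s (∂E/∂x_s) v_s = 0`. -/
theorem cauchy_kernel_monogenic (H : HCAlg 𝔸 m)
    (x : Fin (m + 1) → ℝ) (hx : x ≠ 0) :
    (∑ s, H.mul (H.v s) (pd1 (CauchyE H) s x)) = 0 ∧
    (∑ s, H.mul (pd1 (CauchyE H) s x) (H.v s)) = 0 := by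
  have hq : ∑ i, x i ^ 2 ≠ 0 := sum_sq_ne_zero hx
  have hcoef : (usigma (m + 1))⁻¹ * (∑ i, x i ^ 2) ^ (-((m : ℝ) + 1) / 2) * (m + 1) +
      -(usigma (m + 1))⁻¹ * (m + 1) * (∑ i, x i ^ 2) ^ (-((m : ℝ) + 1) / 2 - 1) *
        ∑ i, x i ^ 2 = 0 := by
    rw [Real.rpow_sub_one hq]
    field_simp
    ring
  simp only [H.pd1_cauchyE hx, H.sum_v_mul_radial_deriv, H.sum_radial_deriv_mul_v, hcoef,
    zero_smul, and_self]

end
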